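/- Empirical dual recursion (Lemma 5): let X be a finite state space partitioned into H, U, E with U ∪ E absorbing, let P̂_{t,x} be probability vectors on X for t ∈ {0,…,T_max−1}, x ∈ H, and let r ≥ 0. Define the empirical robust safety function Ŝ^R with rectangular Wasserstein (Hamming) ambiguity sets of radius r around the centers P̂_{t,x}. Then with c(x,l) = 1 if l ∈ U and 0 otherwise, and Ŝ^R(t+1,l) = 0 for l ∈ U ∪ E, for every t ∈ {0,…,T_max−1} and x ∈ H: Ŝ^R(t,x) = inf over λ ≥ 0 of [ λ r + Σ_{y∈X} ( max_{l∈X} ( −λ d(y,l) + c(x,l) + Ŝ^R(t+1,l) ) ) P̂_{t,x}(y) ], where d is the Hamming metric. -/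

import Mathlib

open Finset

/-- A probability vector on a finite set `X`. -/
def IsProbVec {X : Type*} [Fintype X] (μ : X → ℝ) : Prop :=
  (∀ x, 0 ≤ μ x) ∧ ∑ x, μ x = 1

/-- A coupling of two probability vectors on a finite set `X`. -/
def IsCoupling {X : Type*} [Fintype X] (μ ν : X → ℝ) (Γ : X × X → ℝ) : Prop :=
  (∀ p, 0 ≤ Γ p) ∧ (∀ y, ∑ z, Γ (y, z) = μ y) ∧ (∀ z, ∑ y, Γ (y, z) = ν z)

/-- `d` is a metric on `X`. -/
def IsMetricOn {X : Type*} (d : X → X → ℝ) : Prop :=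
  (∀ x y, 0 ≤ d x y) ∧ (∀ x y, d x y = 0 ↔ x = y) ∧ (∀ x y, d x y = d y x) ∧
    (∀ x y z, d x z ≤ d x y + d y z)

/-- The 1-Wasserstein distance between probability vectors on a finite set. -/
noncomputable def Wass {X : Type*} [Fintype X] (d : X → X → ℝ) (μ ν : X → ℝ) : ℝ :=
  sInf {c | ∃ Γ : X × X → ℝ, IsCoupling μ ν Γ ∧ c = ∑ p : X × X, Γ p * d p.1 p.2}


/-- The Hamming distance on `X`. -/
def hamming {X : Type*} [DecidableEq X] (x y : X) : ℝ := if x = y then 0 else 1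

/-- The probability, under the time-inhomogeneous kernel family `Q`, that the chain started at
state `x` at time `t` hits the unsafe set `U` before hitting the goal set `E` within `n` further
steps (states in `U ∪ E` are treated as absorbing). -/
noncomputable def hitProbAux {X : Type*} [Fintype X] [DecidableEq X] (U E : Finset X)
    (Q : ℕ → X → X → ℝ) : ℕ → ℕ → X → ℝ
  | 0, _, x => if x ∈ U then 1 else 0
  | n + 1, t, x =>
      if x ∈ U then 1
      else if x ∈ E then 0
      else ∑ y, Q t x y * hitProbAux U E Q n (t + 1) y

/-- The robust safety function: the supremum, over all perturbed kernel families whose rows (for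
living states) lie in the Wasserstein (Hamming) ball of radius `δ` around the nominal rows of `P`,
of the probability of hitting `U` before `E`, started from state `x` at time `t`, with almost-sure
hitting-time bound `Tmax`. -/
noncomputable def robustSafety {X : Type*} [Fintype X] [DecidableEq X] (U E : Finset X)
    (P : ℕ → X → X → ℝ) (δ : ℝ) (Tmax : ℕ) (t : ℕ) (x : X) : ℝ :=
  sSup {s | ∃ Q : ℕ → X → X → ℝ,
    (∀ k y, IsProbVec (Q k y)) ∧
    (∀ k y, y ∉ U → y ∉ E → Wass hamming (Q k y) (P k y) ≤ δ) ∧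
    s = hitProbAux U E Q (Tmax - t) t x}

/-! Because the ambiguity set is rectangular, the worst-case hitting probability obeys backward
induction: with `n + 1` steps to go it is the worst one-step expectation of the value with `n`
steps to go, and a worst-case kernel can be chosen state by state. For the Hamming cost the
one-step problem `sup {⟨q, v⟩ | W(q, p) ≤ r}` is a linear program whose dual is the infimum over
`λ` in the statement. Weak duality comes from integrating
`v a ≤ λ d(a, b) + max_l (v l - λ d(b, l))` against a coupling; strong duality, with attainment,
comes from moving mass `r` from the states of lowest value onto a maximiser of `v`: if `θ` is the
value level at which this cut happens, then `λ = max v - θ` is an optimal multiplier. -/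

theorem isMetricOn_hamming {X : Type*} [DecidableEq X] : IsMetricOn (hamming : X → X → ℝ) := by
  refine ⟨fun x y => ?_, fun x y => ?_, fun x y => ?_, fun x y z => ?_⟩ <;>
    unfold hamming <;> split_ifs <;> simp_all

section Wasserstein

variable {X : Type*} [Fintype X]

theorem isCoupling_prod {μ ν : X → ℝ} (hμ : IsProbVec μ) (hν : IsProbVec ν) :
    IsCoupling μ ν fun p => μ p.1 * ν p.2 :=
  ⟨fun p => mul_nonneg (hμ.1 _) (hν.1 _),
    fun y => show ∑ z, μ y * ν z = μ y by rw [← mul_sum, hν.2, mul_one],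
    fun z => show ∑ y, μ y * ν z = ν z by rw [← sum_mul, hμ.2, one_mul]⟩

theorem bddBelow_couplingCosts {d : X → X → ℝ} (hd : ∀ x y, 0 ≤ d x y) (μ ν : X → ℝ) :
    BddBelow {c | ∃ Γ : X × X → ℝ, IsCoupling μ ν Γ ∧ c = ∑ p : X × X, Γ p * d p.1 p.2} :=
  ⟨0, by
    rintro _ ⟨Γ, hΓ, rfl⟩
    exact sum_nonneg fun p _ => mul_nonneg (hΓ.1 p) (hd _ _)⟩

theorem Wass_le_of_isCoupling {d : X → X → ℝ} (hd : ∀ x y, 0 ≤ d x y) {μ ν : X → ℝ}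
    {Γ : X × X → ℝ} (hΓ : IsCoupling μ ν Γ) : Wass d μ ν ≤ ∑ p : X × X, Γ p * d p.1 p.2 :=
  csInf_le (bddBelow_couplingCosts hd μ ν) ⟨Γ, hΓ, rfl⟩

def wassBall (d : X → X → ℝ) (p : X → ℝ) (r : ℝ) : Set (X → ℝ) :=
  {q | IsProbVec q ∧ Wass d q p ≤ r}

end Wasserstein

section Duality

variable {X : Type*} [Fintype X] [Nonempty X]

def dualObjective (d : X → X → ℝ) (v p : X → ℝ) (r lam : ℝ) : ℝ :=
  lam * r + ∑ y, (univ.sup' univ_nonempty fun l => -lam * d y l + v l) * p y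

noncomputable def dualValue (d : X → X → ℝ) (v p : X → ℝ) (r : ℝ) : ℝ :=
  sInf {s | ∃ lam : ℝ, 0 ≤ lam ∧ s = dualObjective d v p r lam}

theorem sum_mul_le_of_isCoupling {d : X → X → ℝ} (hd : ∀ x y, d x y = d y x) {q p : X → ℝ}
    {Γ : X × X → ℝ} (hΓ : IsCoupling q p Γ) (v : X → ℝ) (lam : ℝ) :
    ∑ y, q y * v y ≤ lam * ∑ z : X × X, Γ z * d z.1 z.2 +
      ∑ y, (univ.sup' univ_nonempty fun l => -lam * d y l + v l) * p y := by
  set φ : X → ℝ := fun y => univ.sup' univ_nonempty fun l => -lam * d y l + v l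
  have hv : ∀ a b, v a ≤ lam * d a b + φ b := fun a b => by
    have := le_sup' (fun l => -lam * d b l + v l) (mem_univ a)
    rw [hd a b]
    linarith
  calc ∑ a, q a * v a = ∑ a, ∑ b, Γ (a, b) * v a := by simp_rw [← hΓ.2.1, sum_mul]
    _ ≤ ∑ a, ∑ b, Γ (a, b) * (lam * d a b + φ b) := by
        gcongr with a _ b _
        exacts [hΓ.1 _, hv a b]
    _ = lam * ∑ z : X × X, Γ z * d z.1 z.2 + ∑ b, (∑ a, Γ (a, b)) * φ b := by
        simp_rw [mul_add, sum_add_distrib, Fintype.sum_prod_type, mul_sum, sum_mul]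
        rw [sum_comm (f := fun a b => Γ (a, b) * φ b)]
        congr 1
        exact sum_congr rfl fun a _ => sum_congr rfl fun b _ => by ring
    _ = _ := by simp only [hΓ.2.2, mul_comm (p _) (φ _)]; rfl

theorem sum_mul_le_dualObjective {d : X → X → ℝ} (hd : IsMetricOn d) {p q : X → ℝ} {r : ℝ}
    (hq : q ∈ wassBall d p r) (hp : IsProbVec p) (v : X → ℝ) {lam : ℝ} (hlam : 0 ≤ lam) :
    ∑ y, q y * v y ≤ dualObjective d v p r lam := by
  set K := ∑ y, (univ.sup' univ_nonempty fun l => -lam * d y l + v l) * p y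
  have hne : {c | ∃ Γ : X × X → ℝ, IsCoupling q p Γ ∧
      c = ∑ z : X × X, Γ z * d z.1 z.2}.Nonempty := ⟨_, _, isCoupling_prod hq.1 hp, rfl⟩
  have hWass : ∑ y, q y * v y - K ≤ lam * Wass d q p := by
    rw [Wass, ← smul_eq_mul, ← Real.sInf_smul_of_nonneg hlam]
    refine le_csInf (hne.smul_set) ?_
    rintro _ ⟨_, ⟨Γ, hΓ, rfl⟩, rfl⟩
    linarith [sum_mul_le_of_isCoupling hd.2.2.1 hΓ v lam, smul_eq_mul lam (∑ z, Γ z * d z.1 z.2)]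
  have := mul_le_mul_of_nonneg_left hq.2 hlam
  unfold dualObjective
  linarith

end Duality

section Hamming

variable {X : Type*} [Fintype X] [DecidableEq X]

theorem sup'_neg_mul_hamming_add [Nonempty X] (v : X → ℝ) {lam : ℝ} (hlam : 0 ≤ lam) (y : X) :
    (univ.sup' univ_nonempty fun l => -lam * hamming y l + v l) =
      max (v y) (univ.sup' univ_nonempty v - lam) := by
  apply le_antisymm
  · refine sup'_le _ _ fun l _ => ?_
    by_cases h : y = l
    · subst h
      simp [hamming]
    · simp only [hamming, if_neg h, mul_one]
      have := le_sup' v (mem_univ l)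
      exact le_max_of_le_right (by linarith)
  · obtain ⟨m, -, hm⟩ := exists_mem_eq_sup' univ_nonempty v
    refine max_le ?_ ?_
    · have hyy : hamming y y = 0 := if_pos rfl
      simpa only [hyy, mul_zero, zero_add] using
        le_sup' (fun l => -lam * hamming y l + v l) (mem_univ y)
    · refine le_trans ?_ (le_sup' (fun l => -lam * hamming y l + v l) (mem_univ m))
      have := isMetricOn_hamming.1 y m
      have : hamming y m ≤ 1 := by unfold hamming; split_ifs <;> norm_num
      rw [hm]
      nlinarith

theorem dualObjective_hamming [Nonempty X] (v p : X → ℝ) (r : ℝ) {lam : ℝ} (hlam : 0 ≤ lam) :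
    dualObjective hamming v p r lam =
      lam * r + ∑ y, max (v y) (univ.sup' univ_nonempty v - lam) * p y := by
  simp only [dualObjective, sup'_neg_mul_hamming_add v hlam]

def moveMass (p ρ : X → ℝ) (m : X) : X → ℝ :=
  fun y => p y - ρ y + if y = m then ∑ z, ρ z else 0

theorem sum_moveMass_mul (p ρ v : X → ℝ) (m : X) :
    ∑ y, moveMass p ρ m y * v y = ∑ y, p y * v y + ∑ y, ρ y * (v m - v y) := by
  simp only [moveMass, add_mul, sub_mul, sum_add_distrib, sum_sub_distrib, ite_mul, zero_mul,
    sum_ite_eq', mem_univ, if_true, mul_sub, sum_mul]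
  ring

variable {p ρ : X → ℝ}

theorem isProbVec_moveMass (hp : IsProbVec p) (hρ : ∀ y, 0 ≤ ρ y) (hρp : ∀ y, ρ y ≤ p y)
    (m : X) : IsProbVec (moveMass p ρ m) := by
  refine ⟨fun y => add_nonneg (sub_nonneg.2 (hρp y)) ?_, ?_⟩
  · split_ifs
    exacts [sum_nonneg fun z _ => hρ z, le_rfl]
  · simp [moveMass, sum_add_distrib, sum_sub_distrib, hp.2]

theorem Wass_moveMass_le (hρ : ∀ y, 0 ≤ ρ y) (hρp : ∀ y, ρ y ≤ p y) (m : X) :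
    Wass hamming (moveMass p ρ m) p ≤ ∑ y, ρ y := by
  set Γ : X × X → ℝ := fun z =>
    (if z.1 = z.2 then p z.1 - ρ z.1 else 0) + if z.1 = m then ρ z.2 else 0
  have hΓ : IsCoupling (moveMass p ρ m) p Γ := by
    refine ⟨fun z => add_nonneg ?_ ?_, fun y => ?_, fun z => ?_⟩
    · split_ifs
      exacts [sub_nonneg.2 (hρp _), le_rfl]
    · split_ifs
      exacts [hρ _, le_rfl]
    · simp only [Γ, moveMass, sum_add_distrib, sum_ite_eq, mem_univ, if_true]
      split_ifs <;> simp
    · simp [Γ, sum_add_distrib]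
  refine (Wass_le_of_isCoupling isMetricOn_hamming.1 hΓ).trans ?_
  calc ∑ z : X × X, Γ z * hamming z.1 z.2
      ≤ ∑ z : X × X, if z.1 = m then ρ z.2 else 0 := by
        refine sum_le_sum fun z _ => ?_
        simp only [Γ, hamming]
        split_ifs <;> simp_all
    _ = ∑ y, ρ y := by simp [Fintype.sum_prod_type]

end Hamming

section Threshold

variable {X : Type*} [Fintype X] [Nonempty X]

theorem exists_threshold (v p : X → ℝ) {r : ℝ} (hr : 0 ≤ r) :
    ∃ θ ≤ univ.sup' univ_nonempty v, ∑ y with v y < θ, p y ≤ r ∧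
      (θ < univ.sup' univ_nonempty v → r ≤ ∑ y with v y ≤ θ, p y) := by
  set M := univ.sup' univ_nonempty v
  -- `θ` is the least value level whose sublevel set carries mass at least `r`, and `M` if none
  set C : Finset ℝ := insert M ((univ.filter fun z => r ≤ ∑ y with v y ≤ v z, p y).image v)
  have hC : C.Nonempty := insert_nonempty _ _
  refine ⟨C.min' hC, C.min'_le M (mem_insert_self _ _), ?_, fun hlt => ?_⟩
  · by_contra! hgt
    have hne : (univ.filter fun y => v y < C.min' hC).Nonempty := by
      by_contra hempty
      rw [not_nonempty_iff_eq_empty.1 hempty, sum_empty] at hgt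
      linarith
    obtain ⟨z, hz, hzmax⟩ := exists_mem_eq_sup' hne v
    have hlevel : (univ.filter fun y => v y ≤ v z) = univ.filter fun y => v y < C.min' hC := by
      ext y
      simp only [mem_filter, mem_univ, true_and]
      refine ⟨fun h => h.trans_lt (mem_filter.1 hz).2, fun h => ?_⟩
      rw [← hzmax]
      exact le_sup' v (mem_filter.2 ⟨mem_univ _, h⟩)
    have hzC : v z ∈ C :=
      mem_insert_of_mem <| mem_image_of_mem v <|
        mem_filter.2 ⟨mem_univ z, by rw [hlevel]; exact hgt.le⟩
    exact (C.min'_le _ hzC).not_gt (mem_filter.1 hz).2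
  · rcases mem_insert.1 (C.min'_mem hC) with h | h
    · exact absurd h hlt.ne
    · obtain ⟨z, hz, hzθ⟩ := mem_image.1 h
      rw [← hzθ]
      exact (mem_filter.1 hz).2

theorem exists_cutoff (v : X → ℝ) {p : X → ℝ} (hp : ∀ y, 0 ≤ p y) {r : ℝ} (hr : 0 ≤ r) :
    ∃ θ ≤ univ.sup' univ_nonempty v, ∃ ρ : X → ℝ, (∀ y, 0 ≤ ρ y) ∧ (∀ y, ρ y ≤ p y) ∧
      (∀ y, v y < θ → ρ y = p y) ∧ (∀ y, θ < v y → ρ y = 0) ∧ ∑ y, ρ y ≤ r ∧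
      (θ < univ.sup' univ_nonempty v → ∑ y, ρ y = r) := by
  obtain ⟨θ, hθM, hbelow, hupto⟩ := exists_threshold v p hr
  set a := ∑ y with v y < θ, p y
  set b := ∑ y with v y = θ, p y
  have hb : 0 ≤ b := sum_nonneg fun y _ => hp y
  have hab : ∑ y with v y ≤ θ, p y = a + b := by
    simp only [a, b, sum_filter, ← sum_add_distrib]
    refine sum_congr rfl fun y _ => ?_
    rcases lt_trichotomy (v y) θ with h | h | h
    · simp [h, h.le, h.ne]
    · simp [h]
    · simp [h.not_ge, h.not_gt, h.ne']
  -- the fraction of the mass at level `θ` that is moved too (`0` if there is none: `x / 0 = 0`)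
  set c := min (r - a) b / b
  have hcb : c * b = min (r - a) b := div_mul_cancel_of_imp fun h => by simp [h, hbelow]
  have hc0 : 0 ≤ c := div_nonneg (le_min (sub_nonneg.2 hbelow) hb) hb
  have hc1 : c ≤ 1 := div_le_one_of_le₀ (min_le_right _ _) hb
  set ρ : X → ℝ := fun y => (if v y < θ then p y else 0) + c * if v y = θ then p y else 0
  have hρsum : ∑ y, ρ y = a + min (r - a) b := by
    simp only [ρ, sum_add_distrib, ← mul_sum, ← sum_filter, a, b, hcb]
  refine ⟨θ, hθM, ρ, fun y => ?_, fun y => ?_, fun y h => ?_, fun y h => ?_, ?_, fun hlt => ?_⟩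
  · have := hp y
    simp only [ρ]
    split_ifs <;> positivity
  · have := hp y
    simp only [ρ]
    split_ifs <;> nlinarith
  · simp [ρ, h, h.ne]
  · simp [ρ, h.not_gt, h.ne']
  · rw [hρsum]
    linarith [min_le_left (r - a) b]
  · rw [hρsum, min_eq_left (by linarith [hupto hlt])]
    ring

end Threshold

section StrongDuality

variable {X : Type*} [Fintype X] [DecidableEq X] [Nonempty X]

theorem exists_mem_wassBall_dualObjective_le (v : X → ℝ) {p : X → ℝ} (hp : IsProbVec p) {r : ℝ}
    (hr : 0 ≤ r) :
    ∃ q ∈ wassBall hamming p r, ∃ lam, 0 ≤ lam ∧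
      dualObjective hamming v p r lam ≤ ∑ y, q y * v y := by
  obtain ⟨m, -, hm⟩ := exists_mem_eq_sup' univ_nonempty v
  obtain ⟨θ, hθM, ρ, hρ, hρp, hρlt, hρgt, hρr, hρeq⟩ := exists_cutoff v hp.1 hr
  set M := univ.sup' univ_nonempty v
  refine ⟨moveMass p ρ m, ⟨isProbVec_moveMass hp hρ hρp m, (Wass_moveMass_le hρ hρp m).trans hρr⟩,
    M - θ, sub_nonneg.2 hθM, ?_⟩
  have hmax : ∀ y, max (v y) θ * p y = p y * v y + ρ y * (θ - v y) := fun y => by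
    rcases lt_trichotomy (v y) θ with h | h | h
    · rw [max_eq_right h.le, hρlt y h]; ring
    · rw [h, max_self]; ring
    · rw [max_eq_left h.le, hρgt y h]; ring
  have hmoved : (M - θ) * r ≤ (M - θ) * ∑ y, ρ y := by
    rcases hθM.lt_or_eq with h | h
    · rw [hρeq h]
    · simp [h]
  have hgain : ∑ y, ρ y * (M - v y) = ∑ y, ρ y * (θ - v y) + (M - θ) * ∑ y, ρ y := by
    rw [mul_sum, ← sum_add_distrib]
    exact sum_congr rfl fun y _ => by ring
  rw [dualObjective_hamming v p r (sub_nonneg.2 hθM), sub_sub_cancel, sum_moveMass_mul, ← hm]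
  simp only [hmax, sum_add_distrib]
  linarith

theorem isGreatest_dualValue (v : X → ℝ) {p : X → ℝ} (hp : IsProbVec p) {r : ℝ} (hr : 0 ≤ r) :
    IsGreatest ((fun q => ∑ y, q y * v y) '' wassBall hamming p r) (dualValue hamming v p r) := by
  obtain ⟨q, hq, lam, hlam, hle⟩ := exists_mem_wassBall_dualObjective_le v hp hr
  have hweak : ∀ q' ∈ wassBall hamming p r, ∑ y, q' y * v y ∈
      lowerBounds {s | ∃ lam : ℝ, 0 ≤ lam ∧ s = dualObjective hamming v p r lam} := by
    rintro q' hq' _ ⟨lam', hlam', rfl⟩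
    exact sum_mul_le_dualObjective isMetricOn_hamming hq' hp v hlam'
  have hupper : ∀ q' ∈ wassBall hamming p r, ∑ y, q' y * v y ≤ dualValue hamming v p r :=
    fun q' hq' => le_csInf ⟨_, lam, hlam, rfl⟩ (hweak q' hq')
  have hattained : dualValue hamming v p r ≤ ∑ y, q y * v y :=
    (csInf_le ⟨_, hweak q hq⟩ ⟨lam, hlam, rfl⟩).trans hle
  refine ⟨⟨q, hq, (hupper q hq).antisymm hattained⟩, ?_⟩
  rintro _ ⟨q', hq', rfl⟩
  exact hupper q' hq'

end StrongDuality

section DynamicProgramming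

variable {X : Type*} [Fintype X] [DecidableEq X] [Nonempty X] (U E : Finset X)
  (P : ℕ → X → X → ℝ) (r : ℝ)

noncomputable def robustValue : ℕ → ℕ → X → ℝ
  | 0, _, z => if z ∈ U then 1 else 0
  | n + 1, k, z =>
      if z ∈ U then 1
      else if z ∈ E then 0
      else dualValue hamming (robustValue n (k + 1)) (P k z) r

variable {U E P r}

theorem robustValue_of_mem_left {z : X} (hz : z ∈ U) (n k : ℕ) :
    robustValue U E P r n k z = 1 := by
  cases n <;> simp [robustValue, hz]

theorem robustValue_of_mem_right (hUE : Disjoint U E) {z : X} (hz : z ∈ E) (n k : ℕ) :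
    robustValue U E P r n k z = 0 := by
  cases n <;> simp [robustValue, hz, disjoint_right.1 hUE hz]

theorem hitProbAux_le_robustValue (hP : ∀ k y, IsProbVec (P k y)) (hr : 0 ≤ r)
    {Q : ℕ → X → X → ℝ} (hQ : ∀ k y, IsProbVec (Q k y))
    (hQP : ∀ k y, y ∉ U → y ∉ E → Wass hamming (Q k y) (P k y) ≤ r) (n : ℕ) :
    ∀ k z, hitProbAux U E Q n k z ≤ robustValue U E P r n k z := by
  induction n with
  | zero => exact fun _ _ => le_rfl
  | succ n ih =>
    intro k z
    simp only [hitProbAux, robustValue]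
    split_ifs with hzU hzE
    · exact le_rfl
    · exact le_rfl
    · calc ∑ y, Q k z y * hitProbAux U E Q n (k + 1) y
          ≤ ∑ y, Q k z y * robustValue U E P r n (k + 1) y :=
            sum_le_sum fun y _ => mul_le_mul_of_nonneg_left (ih _ _) ((hQ k z).1 y)
        _ ≤ _ := (isGreatest_dualValue _ (hP k z) hr).2 ⟨Q k z, ⟨hQ k z, hQP k z hzU hzE⟩, rfl⟩

theorem hitProbAux_eq_robustValue {Tmax : ℕ} {Q : ℕ → X → X → ℝ}
    (hQ : ∀ k z, ∑ y, Q k z y * robustValue U E P r (Tmax - (k + 1)) (k + 1) y =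
      dualValue hamming (robustValue U E P r (Tmax - (k + 1)) (k + 1)) (P k z) r) (n : ℕ) :
    ∀ k z, n + k = Tmax → hitProbAux U E Q n k z = robustValue U E P r n k z := by
  induction n with
  | zero => exact fun _ _ _ => rfl
  | succ n ih =>
    intro k z hnk
    have hQkz := hQ k z
    rw [show Tmax - (k + 1) = n by omega] at hQkz
    simp only [hitProbAux, robustValue]
    split_ifs
    · rfl
    · rfl
    · rw [← hQkz]
      exact sum_congr rfl fun y _ => by rw [ih (k + 1) y (by omega)]

theorem robustSafety_eq_robustValue (hP : ∀ k y, IsProbVec (P k y)) (hr : 0 ≤ r) {Tmax k : ℕ}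
    (hk : k ≤ Tmax) (z : X) :
    robustSafety U E P r Tmax k z = robustValue U E P r (Tmax - k) k z := by
  choose Q hQball hQval using fun k z =>
    (isGreatest_dualValue (robustValue U E P r (Tmax - (k + 1)) (k + 1)) (hP k z) hr).1
  refine IsGreatest.csSup_eq ⟨⟨Q, fun k y => (hQball k y).1, fun k y _ _ => (hQball k y).2,
    (hitProbAux_eq_robustValue hQval _ k z (by omega)).symm⟩, ?_⟩
  rintro _ ⟨Q', hQ', hQ'P, rfl⟩
  exact hitProbAux_le_robustValue hP hr hQ' hQ'P _ _ _

end DynamicProgramming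

/-- Empirical dual recursion (Lemma 5): the dual recursion for the empirical robust safety
function with rectangular Wasserstein (Hamming) ambiguity sets of radius `r` around the
empirical centers `Phat`. -/
theorem empirical_robust_safety_dual_recursion
    {X : Type*} [Fintype X] [DecidableEq X] [Nonempty X]
    (U E : Finset X) (hUE : Disjoint U E)
    (Tmax : ℕ) (Phat : ℕ → X → X → ℝ) (hPhat : ∀ k y, IsProbVec (Phat k y))
    (r : ℝ) (hr : 0 ≤ r)
    (t : ℕ) (ht : t < Tmax) (x : X) (hxU : x ∉ U) (hxE : x ∉ E) :
    robustSafety U E Phat r Tmax t x =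
      sInf {s | ∃ lam : ℝ, 0 ≤ lam ∧
        s = lam * r +
          ∑ y, (Finset.univ.sup' Finset.univ_nonempty fun l =>
              -lam * hamming y l + (if l ∈ U then (1 : ℝ) else 0) +
                (if l ∈ U ∨ l ∈ E then 0 else robustSafety U E Phat r Tmax (t + 1) l)) *
            Phat t x y} := by
  have hnext : ∀ l, (if l ∈ U then (1 : ℝ) else 0) +
      (if l ∈ U ∨ l ∈ E then 0 else robustSafety U E Phat r Tmax (t + 1) l) =
        robustValue U E Phat r (Tmax - (t + 1)) (t + 1) l := fun l => by
    by_cases hlU : l ∈ U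
    · simp [hlU, robustValue_of_mem_left hlU]
    by_cases hlE : l ∈ E
    · simp [hlU, hlE, robustValue_of_mem_right hUE hlE]
    simp [hlU, hlE, robustSafety_eq_robustValue hPhat hr ht]
  rw [robustSafety_eq_robustValue hPhat hr ht.le, show Tmax - t = Tmax - (t + 1) + 1 by omega]
  simp only [robustValue, if_neg hxU, if_neg hxE, add_assoc, hnext]
  rfl
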